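/- arXiv:1407.6483 — 4 statements merged into one kernel-verified Lean document; each statement's English description precedes it below -/
import Mathlib

section
/- If m ≥ 3 is an integer such that tan²(π/m) is rational, then m ∈ {3, 4, 6}. -/
/-!
Since `cos (2x) = 2 / (1 + tan² x) - 1`, the value `cos (2π/m)` is rational. By Niven's theorem
the only rational multiples `r π ∈ [0, π]` with rational cosine have `r ∈ {0, 1/3, 1/2, 2/3, 1}`,
and `r = 2/m` with `m ≥ 3` leaves only `m = 6, 4, 3`.
-/

open Real

theorem cos_two_mul_eq_two_div_one_add_tan_sq_sub_one {x : ℝ} (hx : cos x ≠ 0) :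
    cos (2 * x) = 2 / (1 + tan x ^ 2) - 1 := by
  rw [cos_two_mul, div_eq_mul_inv, inv_one_add_tan_sq hx, mul_comm]

theorem exists_rat_cos_two_mul_of_tan_sq {x : ℝ} (hx : cos x ≠ 0)
    (h : ∃ q : ℚ, tan x ^ 2 = q) : ∃ q : ℚ, cos (2 * x) = q := by
  obtain ⟨q, hq⟩ := h
  refine ⟨2 / (1 + q) - 1, ?_⟩
  rw [cos_two_mul_eq_two_div_one_add_tan_sq_sub_one hx, hq]
  push_cast
  rfl

theorem eq_three_or_four_or_six_of_two_div_mem {m : ℕ} (hm : 3 ≤ m)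
    (h : (2 / m : ℚ) ∈ ({0, 1 / 3, 1 / 2, 2 / 3, 1} : Set ℚ)) : m = 3 ∨ m = 4 ∨ m = 6 := by
  have hm0 : (m : ℚ) ≠ 0 := by positivity
  simp only [Set.mem_insert_iff, Set.mem_singleton_iff] at h
  rcases h with h | h | h | h | h <;> field_simp at h <;> norm_cast at h <;> omega

theorem cos_pi_div_ne_zero {m : ℕ} (hm : 3 ≤ m) : cos (π / m) ≠ 0 := by
  have hm3 : (3 : ℝ) ≤ m := by exact_mod_cast hm
  refine (cos_pos_of_mem_Ioo ⟨?_, ?_⟩).ne'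
  · linarith [pi_pos, (by positivity : 0 < π / m)]
  · exact div_lt_div_of_pos_left pi_pos (by norm_num) (by linarith)

/-- If `m ≥ 3` is an integer such that `tan²(π/m)` is rational, then `m ∈ {3, 4, 6}`. -/
theorem stmt_0 (m : ℕ) (hm : 3 ≤ m)
    (hrat : ∃ q : ℚ, (Real.tan (Real.pi / m)) ^ 2 = (q : ℝ)) :
    m = 3 ∨ m = 4 ∨ m = 6 := by
  apply eq_three_or_four_or_six_of_two_div_mem hm
  apply niven_angle_div_pi_eq
  · obtain ⟨q, hq⟩ := exists_rat_cos_two_mul_of_tan_sq (cos_pi_div_ne_zero hm) hrat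
    exact ⟨q, by rw [← hq]; push_cast; ring_nf⟩
  · constructor
    · positivity
    · rw [div_le_one (by positivity)]
      norm_cast
      omega
end

section
/- The number 4cos²(π/m) is an integer for an integer m ≥ 2 if and only if m ∈ {2, 3, 4, 6}, in which case 4cos²(π/m) equals 0, 1, 2, 3 respectively. -/
/-! For `x ≥ 2` the angle `π / x` lies in `(0, π / 2]`, where `cos` is positive-valued and
strictly decreasing, so `4 cos² (π / x)` increases strictly from `0` (at `x = 2`) and stays
below `4`. An integer value is therefore one of `0, 1, 2, 3`, and these are attained at
`m = 2, 3, 4, 6`; strict monotonicity rules out every other `m`. -/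

open Real Set

lemma pi_div_mem_Ioc_of_two_le {x : ℝ} (hx : 2 ≤ x) : π / x ∈ Ioc 0 (π / 2) :=
  ⟨by positivity, div_le_div_of_nonneg_left pi_pos.le two_pos hx⟩

lemma cos_pi_div_nonneg {x : ℝ} (hx : 2 ≤ x) : 0 ≤ cos (π / x) := by
  obtain ⟨hpos, hle⟩ := pi_div_mem_Ioc_of_two_le hx
  exact cos_nonneg_of_neg_pi_div_two_le_of_le (by linarith [pi_pos]) hle

lemma cos_pi_div_lt_one {x : ℝ} (hx : 2 ≤ x) : cos (π / x) < 1 := by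
  obtain ⟨hpos, hle⟩ := pi_div_mem_Ioc_of_two_le hx
  simpa using cos_lt_cos_of_nonneg_of_le_pi le_rfl (by linarith [pi_pos]) hpos

lemma strictMonoOn_cos_pi_div_sq : StrictMonoOn (fun x : ℝ => cos (π / x) ^ 2) (Ici 2) := by
  intro x hx y hy hxy
  obtain ⟨hy₀, -⟩ := pi_div_mem_Ioc_of_two_le hy
  have hcos : cos (π / x) < cos (π / y) :=
    cos_lt_cos_of_nonneg_of_le_pi_div_two hy₀.le (pi_div_mem_Ioc_of_two_le hx).2
      (div_lt_div_of_pos_left pi_pos (by linarith [mem_Ici.mp hx]) hxy)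
  exact pow_lt_pow_left₀ hcos (cos_pi_div_nonneg hx) two_ne_zero

lemma four_mul_cos_pi_div_sq_mem_Ico {x : ℝ} (hx : 2 ≤ x) : 4 * cos (π / x) ^ 2 ∈ Ico 0 4 := by
  have h₀ := cos_pi_div_nonneg hx
  have h₁ := cos_pi_div_lt_one hx
  constructor <;> nlinarith

lemma injOn_four_mul_cos_pi_div_sq :
    InjOn (fun m : ℕ => 4 * cos (π / m) ^ 2) {m | 2 ≤ m} := by
  intro m hm n hn h
  have hmono := strictMonoOn_cos_pi_div_sq.injOn
    (mem_Ici.mpr (by exact_mod_cast hm : (2 : ℝ) ≤ m))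
    (mem_Ici.mpr (by exact_mod_cast hn : (2 : ℝ) ≤ n))
  exact_mod_cast hmono (by simpa using h)

lemma four_mul_cos_pi_div_two_sq : 4 * cos (π / 2) ^ 2 = 0 := by
  simp

lemma four_mul_cos_pi_div_three_sq : 4 * cos (π / 3) ^ 2 = 1 := by
  norm_num [cos_pi_div_three]

lemma four_mul_cos_pi_div_four_sq : 4 * cos (π / 4) ^ 2 = 2 := by
  rw [cos_pi_div_four, div_pow, sq_sqrt zero_le_two]
  norm_num

lemma four_mul_cos_pi_div_six_sq : 4 * cos (π / 6) ^ 2 = 3 := by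
  rw [sq_cos_pi_div_six]
  norm_num

/-- For an integer `m ≥ 2`, the number `4cos²(π/m)` is an integer iff `m ∈ {2,3,4,6}`,
in which case it equals `0, 1, 2, 3` respectively. -/
theorem stmt_2 (m : ℕ) (hm : 2 ≤ m) :
    ((∃ k : ℤ, 4 * (Real.cos (Real.pi / m)) ^ 2 = (k : ℝ)) ↔
      (m = 2 ∨ m = 3 ∨ m = 4 ∨ m = 6)) ∧
    (m = 2 → 4 * (Real.cos (Real.pi / m)) ^ 2 = 0) ∧
    (m = 3 → 4 * (Real.cos (Real.pi / m)) ^ 2 = 1) ∧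
    (m = 4 → 4 * (Real.cos (Real.pi / m)) ^ 2 = 2) ∧
    (m = 6 → 4 * (Real.cos (Real.pi / m)) ^ 2 = 3) := by
  have h₂ : m = 2 → 4 * cos (π / m) ^ 2 = 0 := by
    rintro rfl; exact_mod_cast four_mul_cos_pi_div_two_sq
  have h₃ : m = 3 → 4 * cos (π / m) ^ 2 = 1 := by
    rintro rfl; exact_mod_cast four_mul_cos_pi_div_three_sq
  have h₄ : m = 4 → 4 * cos (π / m) ^ 2 = 2 := by
    rintro rfl; exact_mod_cast four_mul_cos_pi_div_four_sq
  have h₆ : m = 6 → 4 * cos (π / m) ^ 2 = 3 := by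
    rintro rfl; exact_mod_cast four_mul_cos_pi_div_six_sq
  refine ⟨⟨?_, ?_⟩, h₂, h₃, h₄, h₆⟩
  · rintro ⟨k, hk⟩
    obtain ⟨hk₀, hk₄⟩ := four_mul_cos_pi_div_sq_mem_Ico (by exact_mod_cast hm : (2 : ℝ) ≤ m)
    rw [hk] at hk₀ hk₄
    have hm_eq (n : ℕ) (hn : 2 ≤ n) (h : 4 * cos (π / n) ^ 2 = k) : m = n :=
      injOn_four_mul_cos_pi_div_sq hm hn (hk.trans h.symm)
    obtain rfl | rfl | rfl | rfl : k = 0 ∨ k = 1 ∨ k = 2 ∨ k = 3 := by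
      have : 0 ≤ k ∧ k < 4 := ⟨by exact_mod_cast hk₀, by exact_mod_cast hk₄⟩
      omega
    · exact .inl (hm_eq 2 le_rfl (by exact_mod_cast four_mul_cos_pi_div_two_sq))
    · exact .inr <| .inl (hm_eq 3 (by norm_num) (by exact_mod_cast four_mul_cos_pi_div_three_sq))
    · exact .inr <| .inr <| .inl
        (hm_eq 4 (by norm_num) (by exact_mod_cast four_mul_cos_pi_div_four_sq))
    · exact .inr <| .inr <| .inr
        (hm_eq 6 (by norm_num) (by exact_mod_cast four_mul_cos_pi_div_six_sq))
  · rintro (rfl | rfl | rfl | rfl)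
    · exact ⟨0, by exact_mod_cast h₂ rfl⟩
    · exact ⟨1, by exact_mod_cast h₃ rfl⟩
    · exact ⟨2, by exact_mod_cast h₄ rfl⟩
    · exact ⟨3, by exact_mod_cast h₆ rfl⟩
end

section
/- Let z = a + bi be a complex number with a ∈ ℚ, a > 0, b > 0, and suppose that for an integer m ≥ 2 the quantities (z^j - z̄^j)/(2bi) are nonnegative real numbers for j = 0,…,m with equality for j = m. Then the argument of z equals π/m. -/
/-!
Write `θ = arg z ∈ (0, π)`. Since `z ^ j - z̄ ^ j = 2i Im (z ^ j)` and `Im (z ^ j) = |z| ^ j sin (jθ)`,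
the hypotheses say `sin (jθ) ≥ 0` for `j ≤ m` and `sin (mθ) = 0`. If `mθ > π`, the first multiple
`jθ` beyond `π` satisfies `j ≤ m` and `π < jθ ≤ π + θ < 2π`, so `sin (jθ) < 0`. Hence `0 < mθ ≤ π`
with `sin (mθ) = 0`, i.e. `mθ = π`.
-/

open Real

theorem exists_le_sin_mul_neg_of_pi_lt {θ : ℝ} {m : ℕ} (hθ : 0 < θ) (hθπ : θ < π)
    (hm : π < m * θ) : ∃ j ≤ m, sin (j * θ) < 0 := by
  set n := ⌊π / θ⌋₊
  have hn_le : n * θ ≤ π := (le_div_iff₀ hθ).mp (Nat.floor_le (by positivity))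
  have hlt_succ : π < (n + 1) * θ := (div_lt_iff₀ hθ).mp (Nat.lt_floor_add_one _)
  have hnm : (n : ℝ) < m := lt_of_mul_lt_mul_right (hn_le.trans_lt hm) hθ.le
  refine ⟨n + 1, by exact_mod_cast hnm, ?_⟩
  have hpos : 0 < sin ((n + 1) * θ - π) := sin_pos_of_pos_of_lt_pi (by linarith) (by linarith)
  push_cast
  linarith [sin_sub_pi ((n + 1) * θ)]

theorem eq_pi_div_of_sin_mul_nonneg {θ : ℝ} {m : ℕ} (hθ : 0 < θ) (hθπ : θ < π) (hm : m ≠ 0)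
    (hsin : ∀ j ≤ m, 0 ≤ sin (j * θ)) (hsin_m : sin (m * θ) = 0) : θ = π / m := by
  have hle : m * θ ≤ π := by
    by_contra! h
    obtain ⟨j, hj, hneg⟩ := exists_le_sin_mul_neg_of_pi_lt hθ hθπ h
    exact (hsin j hj).not_gt hneg
  have hmθ : m * θ = π := by
    by_contra hne
    exact (sin_pos_of_pos_of_lt_pi (by positivity) (hle.lt_of_ne hne)).ne' hsin_m
  rw [eq_div_iff (by positivity)]
  linarith

namespace Complex

open ComplexConjugate

theorem arg_pos_of_im_pos {z : ℂ} (hz : 0 < z.im) : 0 < arg z :=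
  (arg_nonneg_iff.2 hz.le).lt_of_ne fun h => hz.ne' (arg_eq_zero_iff.1 h.symm).2

theorem im_pow (z : ℂ) (n : ℕ) : (z ^ n).im = ‖z‖ ^ n * Real.sin (n * arg z) := by
  conv_lhs => rw [← norm_mul_exp_arg_mul_I z]
  rw [mul_pow, ← exp_nat_mul, ← ofReal_pow]
  have h : (n : ℂ) * (arg z * I) = ((n * arg z : ℝ) : ℂ) * I := by push_cast; ring
  rw [h, im_ofReal_mul, exp_ofReal_mul_I_im]

theorem pow_sub_conj_pow_div (z : ℂ) (n : ℕ) :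
    (z ^ n - conj z ^ n) / (2 * z.im * I) = ((z ^ n).im / z.im : ℝ) := by
  rw [← map_pow, sub_conj]
  rcases eq_or_ne z.im 0 with h | h
  · simp [h]
  · push_cast
    field_simp

theorem sin_mul_arg_nonneg_iff {z : ℂ} (hz : z ≠ 0) (n : ℕ) :
    0 ≤ Real.sin (n * arg z) ↔ 0 ≤ (z ^ n).im := by
  rw [im_pow, mul_nonneg_iff_of_pos_left (pow_pos (norm_pos_iff.2 hz) n)]

theorem sin_mul_arg_eq_zero_iff {z : ℂ} (hz : z ≠ 0) (n : ℕ) :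
    Real.sin (n * arg z) = 0 ↔ (z ^ n).im = 0 := by
  rw [im_pow, mul_eq_zero, or_iff_right (pow_ne_zero n (norm_ne_zero_iff.2 hz))]

end Complex

open Complex in
theorem stmt_3_general (a b : ℝ) (hb : 0 < b)
    (z : ℂ) (hz : z = Complex.mk a b) (m : ℕ) (hm : 2 ≤ m)
    (hnonneg : ∀ j : ℕ, j ≤ m → ∃ r : ℝ,
      (z ^ j - (starRingEnd ℂ z) ^ j) / (2 * b * Complex.I) = (r : ℂ) ∧ 0 ≤ r)
    (heq : (z ^ m - (starRingEnd ℂ z) ^ m) / (2 * b * Complex.I) = 0) :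
    Complex.arg z = Real.pi / m := by
  obtain rfl : b = z.im := by rw [hz]
  have hz0 : z ≠ 0 := fun h => by simp [h] at hb
  simp only [pow_sub_conj_pow_div, ofReal_eq_zero, div_eq_zero_iff, hb.ne', or_false,
    ofReal_inj] at hnonneg heq
  refine eq_pi_div_of_sin_mul_nonneg (arg_pos_of_im_pos hb) (arg_lt_pi_iff.2 (.inr hb.ne'))
    (by omega) (fun j hj => ?_) ((sin_mul_arg_eq_zero_iff hz0 m).2 heq)
  obtain ⟨r, hr, hr0⟩ := hnonneg j hj
  rw [sin_mul_arg_nonneg_iff hz0]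
  rw [← hr, le_div_iff₀ hb, zero_mul] at hr0
  exact hr0

open Complex in
/-- Let `z = a + bi` with `a ∈ ℚ`, `a > 0`, `b > 0`, and suppose that for an integer
`m ≥ 2` the quantities `(z^j - z̄^j)/(2bi)` are nonnegative reals for `j = 0,…,m`,
with equality for `j = m`. Then the argument of `z` equals `π/m`. -/
theorem stmt_3 (a b : ℝ) (ha : ∃ q : ℚ, a = (q : ℝ)) (ha' : 0 < a) (hb : 0 < b)
    (z : ℂ) (hz : z = Complex.mk a b) (m : ℕ) (hm : 2 ≤ m)
    (hnonneg : ∀ j : ℕ, j ≤ m → ∃ r : ℝ,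
      (z ^ j - (starRingEnd ℂ z) ^ j) / (2 * b * Complex.I) = (r : ℂ) ∧ 0 ≤ r)
    (heq : (z ^ m - (starRingEnd ℂ z) ^ m) / (2 * b * Complex.I) = 0) :
    Complex.arg z = Real.pi / m :=
  stmt_3_general a b hb z hz m hm hnonneg heq
end

section
/- Let B be a 2×2 integer matrix with |det B| = 1. If the entries of B are α = -(μ₂/μ₁)·c, β = μ₂, γ = (1 - c·d)/μ₁, δ = d for positive integers μ₁, μ₂ and integers c, d, and all of α, β, γ, δ are integers, then μ₁ = μ₂. -/
/-- Change-of-basis computation: if `α = -(μ₂/μ₁)·c`, `β = μ₂`, `γ = (1 - c·d)/μ₁`,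
`δ = d` are all integers, with `μ₁, μ₂` positive integers, `c, d` integers, and
`|αδ - βγ| = 1`, then `μ₁ = μ₂`. -/
theorem stmt_4 (μ₁ μ₂ c d : ℤ) (hμ₁ : 0 < μ₁) (hμ₂ : 0 < μ₂)
    (α β γ δ : ℤ)
    (hα : (α : ℚ) = -((μ₂ : ℚ) / (μ₁ : ℚ)) * (c : ℚ))
    (hβ : β = μ₂)
    (hγ : (γ : ℚ) = (1 - (c : ℚ) * (d : ℚ)) / (μ₁ : ℚ))
    (hδ : δ = d)
    (hdet : |α * δ - β * γ| = 1) :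
    μ₁ = μ₂ := by
  have h1 : (μ₁ : ℚ) ≠ 0 := by positivity
  have key : ((α * δ - β * γ : ℤ) : ℚ) * (μ₁ : ℚ) = -(μ₂ : ℚ) := by
    push_cast
    rw [hα, hγ, hβ, hδ]
    field_simp
    ring
  rcases (abs_eq (by norm_num : (0:ℤ) ≤ 1)).mp hdet with h | h <;> rw [h] at key <;>
    push_cast at key
  · exfalso
    have : (μ₁ : ℚ) = -(μ₂ : ℚ) := by linarith
    have : μ₁ = -μ₂ := by exact_mod_cast this
    omega
  · have : -(μ₁ : ℚ) = -(μ₂ : ℚ) := by linarith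
    have : μ₁ = μ₂ := by exact_mod_cast neg_injective this
    exact this
end
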